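/- Let η⋆_{xw}, η⋆_{xw'}, δ⋆_{x'w} : U → [0,1] be measurable with |η⋆_{xw}(u) − η⋆_{xw'}(u)| ≤ ε_w pointwise and δ⋆_{x'w}(u) ≤ U_X pointwise. Define ω_{xw} = E[η⋆_{xw}], ω_{xw'} = E[η⋆_{xw'}], κ0 = E[(1−η⋆_{xw})(1−δ⋆_{x'w})], χ' = E[δ⋆_{x'w}]. Then ω_{xw} − ω_{xw'}·U_X ≥ 1 − κ0 − U_X − ε_w·χ'. -/

import Mathlib

/-!
Pointwise, `1 - (1 - η)(1 - δ) - U_X - ε δ ≤ η - η' U_X`: after cancelling `η` this reads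
`δ (1 - η - ε) ≤ U_X (1 - η')`, which follows from `1 - η - ε ≤ 1 - η'` and `0 ≤ δ ≤ U_X`.
All functions involved are bounded and measurable, hence integrable, so taking expectations
preserves the inequality.
-/

open MeasureTheory

lemma one_sub_mul_one_sub_bound {a b d ε U : ℝ} (hb : b ≤ 1) (hd : 0 ≤ d)
    (hab : -ε ≤ a - b) (hdU : d ≤ U) :
    1 - (1 - a) * (1 - d) - U - ε * d ≤ a - b * U := by
  nlinarith [mul_nonneg hd (by linarith : 0 ≤ a - b + ε),
    mul_nonneg (by linarith : 0 ≤ U - d) (by linarith : 0 ≤ 1 - b)]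

lemma integrable_of_mem_unitInterval {α : Type*} [MeasurableSpace α] {μ : Measure α}
    [IsFiniteMeasure μ] {f : α → ℝ} (hf : Measurable f) (h : ∀ x, f x ∈ unitInterval) :
    Integrable f μ :=
  .of_mem_Icc 0 1 hf.aemeasurable (ae_of_all _ h)

/-- Third coupled inequality in display (14) of Theorem 2 of Silva–Evans:
with `ω_{xw} = E[η⋆_{xw}]`, `ω_{xw'} = E[η⋆_{xw'}]`, `κ₀ = E[(1-η⋆_{xw})(1-δ⋆_{x'w})]`,
`χ' = E[δ⋆_{x'w}]`: `ω_{xw} - ω_{xw'}·U_X ≥ 1 - κ₀ - U_X - ε_w·χ'`. -/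
theorem stmt8 {U : Type*} [MeasurableSpace U] (P : Measure U) [IsProbabilityMeasure P]
    (ηxw ηxw' δx'w : U → ℝ)
    (hη1 : Measurable ηxw) (hη2 : Measurable ηxw') (hδ : Measurable δx'w)
    (hηxw : ∀ u, ηxw u ∈ Set.Icc (0:ℝ) 1) (hηxw' : ∀ u, ηxw' u ∈ Set.Icc (0:ℝ) 1)
    (hδx'w : ∀ u, δx'w u ∈ Set.Icc (0:ℝ) 1)
    (εw UX : ℝ)
    (hcross : ∀ u, |ηxw u - ηxw' u| ≤ εw)
    (hδU : ∀ u, δx'w u ≤ UX) :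
    1 - (∫ u, (1 - ηxw u) * (1 - δx'w u) ∂P) - UX - εw * (∫ u, δx'w u ∂P) ≤
      (∫ u, ηxw u ∂P) - (∫ u, ηxw' u ∂P) * UX := by
  have hi_η := integrable_of_mem_unitInterval (μ := P) hη1 hηxw
  have hi_η' := integrable_of_mem_unitInterval (μ := P) hη2 hηxw'
  have hi_δ := integrable_of_mem_unitInterval (μ := P) hδ hδx'w
  have hi_κ : Integrable (fun u => (1 - ηxw u) * (1 - δx'w u)) P :=
    integrable_of_mem_unitInterval ((measurable_const.sub hη1).mul (measurable_const.sub hδ))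
      fun u => unitInterval.mul_mem (Set.Icc.mem_iff_one_sub_mem.mp (hηxw u))
        (Set.Icc.mem_iff_one_sub_mem.mp (hδx'w u))
  have hi_1κ : Integrable (fun u => 1 - (1 - ηxw u) * (1 - δx'w u)) P :=
    (integrable_const 1).sub hi_κ
  have hi_1κU : Integrable (fun u => 1 - (1 - ηxw u) * (1 - δx'w u) - UX) P :=
    hi_1κ.sub (integrable_const UX)
  have h_expect : ∫ u, (1 - (1 - ηxw u) * (1 - δx'w u) - UX - εw * δx'w u) ∂P ≤
      ∫ u, (ηxw u - ηxw' u * UX) ∂P :=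
    integral_mono (hi_1κU.sub (hi_δ.const_mul εw)) (hi_η.sub (hi_η'.mul_const UX))
      fun u => one_sub_mul_one_sub_bound (hηxw' u).2 (hδx'w u).1 (abs_le.mp (hcross u)).1 (hδU u)
  rwa [integral_sub hi_1κU (hi_δ.const_mul εw), integral_sub hi_1κ (integrable_const UX),
    integral_sub (integrable_const 1) hi_κ, integral_const_mul, integral_const, integral_const,
    integral_sub hi_η (hi_η'.mul_const UX), integral_mul_const, probReal_univ, one_smul,
    one_smul] at h_expect
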